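/- Assume conditions B1–B5 hold for every trial s ∈ {1,…,m}: (B1) for every ω with S ω = s and every a ∈ {z, z'}, Z ω = a implies Ypo a ω = Y ω; (B2) for every a ∈ {z, z'} and every x with μ(X = x, S = s) > 0, E[Ypo a | X = x, S = s, Z = a] = E[Ypo a | X = x, S = s]; (B3) for every a ∈ {z, z'} and every x with μ(X = x, S = s) > 0, μ(Z = a, X = x, S = s) > 0; (B4) for every x with μ(X = x, S = 0) > 0, E[Ypo z − Ypo z' | X = x, S = 0] = E[Ypo z − Ypo z' | X = x, S = s]; (B5) for every x with μ(X = x, S = 0) > 0, μ(X = x, S = s) > 0. Then the transported effects are homogeneous across trials: for all s, s' ∈ {1,…,m}, E[ b_s(X) | S = 0 ] = E[ b_{s'}(X) | S = 0 ], where b_s(x) := E[Y | X = x, S = s, Z = z] − E[Y | X = x, S = s, Z = z']. -/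

import Mathlib

/-!
On a stratum `{X = x, S = s}` of a trial, consistency (B1) turns `E[Y | X = x, S = s, Z = a]`
into `E[Ypo a | X = x, S = s, Z = a]`, and exchangeability (B2) removes the conditioning on
`Z = a`. Hence `b_s(x)` is the conditional average treatment effect of trial `s`, which by (B4)
equals the target effect `E[Ypo z - Ypo z' | X = x, S = 0]`, independent of `s`. This holds
whenever `μ(X = x, S = 0) > 0` (where (B5) makes (B2) applicable), that is, for
`μ(· | S = 0)`-almost every value of `X`, so the two outer integrals agree.
-/

open MeasureTheory ProbabilityTheory

/-- Conditional expectation `E[W | A] := ∫ W dμ(·|A)` where `μ(·|A) := μ(· ∩ A)/μ(A)`. -/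
noncomputable def condMean {Ω : Type*} [MeasurableSpace Ω] (μ : Measure Ω)
    (A : Set Ω) (W : Ω → ℝ) : ℝ :=
  ∫ ω, W ω ∂(μ[|A])

/-- Conditional probability `Pr[B | A] := μ(B ∩ A)/μ(A)`. -/
noncomputable def condPr {Ω : Type*} [MeasurableSpace Ω] (μ : Measure Ω)
    (A B : Set Ω) : ℝ :=
  (μ (B ∩ A) / μ A).toReal

section CondMean

variable {Ω : Type*} [MeasurableSpace Ω] {μ : Measure Ω} {A : Set Ω}

lemma integrable_cond {f : Ω → ℝ} (hf : Integrable f μ) : Integrable f μ[|A] := by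
  rcases eq_or_ne (μ A) 0 with hA | hA
  · simp [cond_eq_zero_of_meas_eq_zero hA]
  · exact hf.restrict.smul_measure (ENNReal.inv_ne_top.2 hA)

lemma condMean_sub {f g : Ω → ℝ} (hf : Integrable f μ) (hg : Integrable g μ) :
    condMean μ A (fun ω => f ω - g ω) = condMean μ A f - condMean μ A g :=
  integral_sub (integrable_cond hf) (integrable_cond hg)

-- No measurability of `A`: the strata `{X = x, …}` need not be measurable, as `𝒳` carries an
-- arbitrary σ-algebra.
lemma condMean_congr {f g : Ω → ℝ} (hf : AEStronglyMeasurable f μ)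
    (hg : AEStronglyMeasurable g μ) (h : Set.EqOn f g A) :
    condMean μ A f = condMean μ A g :=
  integral_congr_ae <| Measure.ae_smul_measure
    ((ae_restrict_iff₀ (hf.restrict.nullMeasurableSet_eq_fun hg.restrict)).2
      (Filter.Eventually.of_forall h)) _

lemma ae_cond_pos_measure_fiber {𝒳 : Type*} [Countable 𝒳] (X : Ω → 𝒳)
    (hA : MeasurableSet A) : ∀ᵐ ω ∂μ[|A], 0 < μ ({ω' | X ω' = X ω} ∩ A) := by
  have hnull : ∀ x, μ ({ω' | X ω' = x} ∩ A) = 0 → μ[|A] {ω | X ω = x} = 0 := fun x hx => by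
    rw [ProbabilityTheory.cond, Measure.smul_apply, Measure.restrict_apply' hA, hx, smul_zero]
  rw [ae_iff]
  refine measure_mono_null (fun ω hω => ?_) ((measure_biUnion_null_iff (Set.to_countable
    {x | μ ({ω' | X ω' = x} ∩ A) = 0})).2 hnull)
  exact Set.mem_biUnion (x := X ω) (nonpos_iff_eq_zero.1 (not_lt.1 hω)) rfl

end CondMean

theorem stmt_8_general
    {Ω 𝒳 𝒵 : Type*} [MeasurableSpace Ω]
    [Fintype 𝒳]
    (μ : Measure Ω)
    (m : ℕ)
    (X : Ω → 𝒳) (S : Ω → Fin (m + 1)) (Z : Ω → 𝒵) (Y : Ω → ℝ) (Ypo : 𝒵 → Ω → ℝ)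
    (hS : Measurable S)
    (hY : Integrable Y μ) (hYpo : ∀ a, Integrable (Ypo a) μ)
    (z z' : 𝒵)
    (B1 : ∀ s : Fin (m + 1), s ≠ 0 → ∀ ω, S ω = s →
      ∀ a ∈ ({z, z'} : Set 𝒵), Z ω = a → Ypo a ω = Y ω)
    (B2 : ∀ s : Fin (m + 1), s ≠ 0 → ∀ a ∈ ({z, z'} : Set 𝒵), ∀ x : 𝒳,
      0 < μ {ω | X ω = x ∧ S ω = s} →
      condMean μ {ω | X ω = x ∧ S ω = s ∧ Z ω = a} (Ypo a)
        = condMean μ {ω | X ω = x ∧ S ω = s} (Ypo a))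
    (B4 : ∀ s : Fin (m + 1), s ≠ 0 → ∀ x : 𝒳, 0 < μ {ω | X ω = x ∧ S ω = 0} →
      condMean μ {ω | X ω = x ∧ S ω = 0} (fun ω => Ypo z ω - Ypo z' ω)
        = condMean μ {ω | X ω = x ∧ S ω = s} (fun ω => Ypo z ω - Ypo z' ω))
    (B5 : ∀ s : Fin (m + 1), s ≠ 0 → ∀ x : 𝒳, 0 < μ {ω | X ω = x ∧ S ω = 0} →
      0 < μ {ω | X ω = x ∧ S ω = s}) :
    ∀ s s' : Fin (m + 1), s ≠ 0 → s' ≠ 0 →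
      condMean μ {ω | S ω = 0}
          (fun ω => condMean μ {ω' | X ω' = X ω ∧ S ω' = s ∧ Z ω' = z} Y
                  - condMean μ {ω' | X ω' = X ω ∧ S ω' = s ∧ Z ω' = z'} Y)
        = condMean μ {ω | S ω = 0}
            (fun ω => condMean μ {ω' | X ω' = X ω ∧ S ω' = s' ∧ Z ω' = z} Y
                    - condMean μ {ω' | X ω' = X ω ∧ S ω' = s' ∧ Z ω' = z'} Y) := by
  intro s s' hs hs'
  have effect_eq_target : ∀ t : Fin (m + 1), t ≠ 0 → ∀ x : 𝒳,
      0 < μ {ω | X ω = x ∧ S ω = 0} →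
      condMean μ {ω | X ω = x ∧ S ω = t ∧ Z ω = z} Y
          - condMean μ {ω | X ω = x ∧ S ω = t ∧ Z ω = z'} Y
        = condMean μ {ω | X ω = x ∧ S ω = 0} (fun ω => Ypo z ω - Ypo z' ω) := by
    intro t ht x hx
    have observed_eq : ∀ a ∈ ({z, z'} : Set 𝒵),
        condMean μ {ω | X ω = x ∧ S ω = t ∧ Z ω = a} Y
          = condMean μ {ω | X ω = x ∧ S ω = t} (Ypo a) := fun a ha =>
      (condMean_congr hY.aestronglyMeasurable (hYpo a).aestronglyMeasurable
        fun ω hω => (B1 t ht ω hω.2.1 a ha hω.2.2).symm).trans (B2 t ht a ha x (B5 t ht x hx))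
    rw [observed_eq z (by simp), observed_eq z' (by simp), ← condMean_sub (hYpo z) (hYpo z'),
      B4 t ht x hx]
  refine integral_congr_ae ?_
  filter_upwards [ae_cond_pos_measure_fiber X (hS (measurableSet_singleton 0))] with ω hω
  rw [effect_eq_target s hs (X ω) hω, effect_eq_target s' hs' (X ω) hω]

theorem stmt_8
    {Ω 𝒳 𝒵 : Type*} [MeasurableSpace Ω]
    [Fintype 𝒳] [Nonempty 𝒳] [MeasurableSpace 𝒳]
    [Fintype 𝒵] [Nonempty 𝒵] [MeasurableSpace 𝒵] [DecidableEq 𝒵]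
    (μ : Measure Ω) [IsProbabilityMeasure μ]
    (m : ℕ) (hm : 1 ≤ m)
    (X : Ω → 𝒳) (S : Ω → Fin (m + 1)) (Z : Ω → 𝒵) (Y : Ω → ℝ) (Ypo : 𝒵 → Ω → ℝ)
    (hX : Measurable X) (hS : Measurable S) (hZ : Measurable Z)
    (hY : Integrable Y μ) (hYpo : ∀ a, Integrable (Ypo a) μ)
    (z z' : 𝒵) (hzz' : z ≠ z')
    (hS0 : 0 < μ {ω | S ω = 0})
    (B1 : ∀ s : Fin (m + 1), s ≠ 0 → ∀ ω, S ω = s →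
      ∀ a ∈ ({z, z'} : Set 𝒵), Z ω = a → Ypo a ω = Y ω)
    (B2 : ∀ s : Fin (m + 1), s ≠ 0 → ∀ a ∈ ({z, z'} : Set 𝒵), ∀ x : 𝒳,
      0 < μ {ω | X ω = x ∧ S ω = s} →
      condMean μ {ω | X ω = x ∧ S ω = s ∧ Z ω = a} (Ypo a)
        = condMean μ {ω | X ω = x ∧ S ω = s} (Ypo a))
    (B3 : ∀ s : Fin (m + 1), s ≠ 0 → ∀ a ∈ ({z, z'} : Set 𝒵), ∀ x : 𝒳,
      0 < μ {ω | X ω = x ∧ S ω = s} → 0 < μ {ω | Z ω = a ∧ X ω = x ∧ S ω = s})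
    (B4 : ∀ s : Fin (m + 1), s ≠ 0 → ∀ x : 𝒳, 0 < μ {ω | X ω = x ∧ S ω = 0} →
      condMean μ {ω | X ω = x ∧ S ω = 0} (fun ω => Ypo z ω - Ypo z' ω)
        = condMean μ {ω | X ω = x ∧ S ω = s} (fun ω => Ypo z ω - Ypo z' ω))
    (B5 : ∀ s : Fin (m + 1), s ≠ 0 → ∀ x : 𝒳, 0 < μ {ω | X ω = x ∧ S ω = 0} →
      0 < μ {ω | X ω = x ∧ S ω = s}) :
    ∀ s s' : Fin (m + 1), s ≠ 0 → s' ≠ 0 →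
      condMean μ {ω | S ω = 0}
          (fun ω => condMean μ {ω' | X ω' = X ω ∧ S ω' = s ∧ Z ω' = z} Y
                  - condMean μ {ω' | X ω' = X ω ∧ S ω' = s ∧ Z ω' = z'} Y)
        = condMean μ {ω | S ω = 0}
            (fun ω => condMean μ {ω' | X ω' = X ω ∧ S ω' = s' ∧ Z ω' = z} Y
                    - condMean μ {ω' | X ω' = X ω ∧ S ω' = s' ∧ Z ω' = z'} Y) :=
  stmt_8_general μ m X S Z Y Ypo hS hY hYpo z z' B1 B2 B4 B5
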